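/- Let X be a 0-dimensional space, let P, K be compact subsets of X × ℕ^ℕ, let f : P → K be a homeomorphism, and let g be an autohomeomorphism of X with g ∘ π_X = π_X ∘ f. For x ∈ P_X = π_X(P), let Φ(x) be the set of all autohomeomorphisms h of ℕ^ℕ such that f(x, c) = (g(x), h(c)) for every c with (x, c) ∈ P. Then the set-valued map Φ : P_X ⇒ H(ℕ^ℕ) is lower semi-continuous: for every open subset W of H(ℕ^ℕ), the set {x ∈ P_X : Φ(x) ∩ W ≠ ∅} is open in P_X. -/

import Mathlib

open Topology Set

/-- A space is *0-dimensional* if it admits a dense topological embedding into a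
compact Hausdorff totally disconnected space (a compactification of covering dimension 0). -/
def ZeroDimensional (Y : Type u) [TopologicalSpace Y] : Prop :=
  ∃ (Z : Type u) (_ : TopologicalSpace Z), CompactSpace Z ∧ T2Space Z ∧
    TotallyDisconnectedSpace Z ∧ ∃ e : Y → Z, Topology.IsEmbedding e ∧ DenseRange e

/-- The metric `d̃(h, h') = sup_c d(h(c), h'(c)) + sup_c d(h⁻¹(c), h'⁻¹(c))` on the
autohomeomorphism group of `ℕ^ℕ`, built from a (bounded) metric `d` on `ℕ^ℕ`. -/
noncomputable def dTilde (d : (ℕ → ℕ) → (ℕ → ℕ) → ℝ)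
    (h h' : (ℕ → ℕ) ≃ₜ (ℕ → ℕ)) : ℝ :=
  (⨆ c : ℕ → ℕ, d (h c) (h' c)) + (⨆ c : ℕ → ℕ, d (h.symm c) (h'.symm c))

/-!
Fix `x₀` and `h₀ ∈ Φ(x₀) ∩ W`, with the `d̃`-ball of radius `ε` about `h₀` inside `W`. By
compactness of the second projection `Q` of `P` there is a depth `K` such that every depth-`K`
cylinder through a point of `Q` is `d`-small and has `d`-small image under `h₀`. The fibres `x`
over which `c ↦ h₀⁻¹ (f (x, c)).2` keeps every `c` in its depth-`K` cylinder form an open set,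
because the projection `P → X` is a closed map. Over such a fibre this map is a homeomorphism
between compact subsets of `ℕ^ℕ` preserving depth-`K` cylinders; extending it cylinder by
cylinder gives an autohomeomorphism `Ψ` moving points only inside small cylinders, so that
`h₀ ∘ Ψ ∈ Φ(x)` is `d̃`-close to `h₀`.

Homeomorphisms between compact subsets of `ℕ^ℕ ≃ₜ ℤ^ℕ` extend by Klee's trick. A homeomorphism
`τ : ℤ^ℕ ≃ₜ ℤ^ℕ × ℤ^ℕ` made of one bijection `ℤ ≃ ℤ × ℤ` per coordinate sends a given compact
`A` to `A × {0}`. On `ℤ^ℕ × ℤ^ℕ`, two shears built from continuous extensions of `ψ` and `ψ⁻¹`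
(retractions onto closed subsets of `ℤ^ℕ`) send `(a, 0)` to `(ψ a, 0)`.
-/

open Function PiNat

section Extension

def HasHomeomorphExtension (Y : Type*) [TopologicalSpace Y] : Prop :=
  ∀ ⦃A : Set Y⦄, IsCompact A → ∀ ψ : A → Y, Continuous ψ → Injective ψ →
    ∃ Ψ : Y ≃ₜ Y, ∀ a : A, Ψ a = ψ a

theorem HasHomeomorphExtension.of_homeomorph {Y Y' : Type*} [TopologicalSpace Y]
    [TopologicalSpace Y'] (e : Y ≃ₜ Y') (h : HasHomeomorphExtension Y') :
    HasHomeomorphExtension Y := by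
  intro A hA ψ hψ hinj
  obtain ⟨Ψ, hΨ⟩ := h (e.symm.isCompact_preimage.2 hA)
    (fun a' => e (ψ ⟨e.symm a', a'.2⟩)) (by fun_prop) fun a' b' hab => by
      simpa [Subtype.ext_iff] using hinj (e.injective hab)
  refine ⟨e.trans (Ψ.trans e.symm), fun a => ?_⟩
  simpa using congrArg e.symm (hΨ ⟨e a, by simp⟩)

theorem exists_continuous_extension_of_isClosed {E : ℕ → Type*} [∀ n, TopologicalSpace (E n)]
    [∀ n, DiscreteTopology (E n)] {Z : Type*} [TopologicalSpace Z] [Nonempty Z]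
    {s : Set (∀ n, E n)} (hs : IsClosed s) {f : s → Z} (hf : Continuous f) :
    ∃ F : (∀ n, E n) → Z, Continuous F ∧ ∀ x : s, F x = f x := by
  rcases s.eq_empty_or_nonempty with rfl | hne
  · exact ⟨fun _ => Classical.arbitrary Z, continuous_const, fun x => x.2.elim⟩
  obtain ⟨r, hr, -, hrc⟩ := exists_retraction_subtype_of_isClosed hs hne
  exact ⟨f ∘ r, hf.comp hrc, fun x => congrArg f (hr x)⟩

def Homeomorph.addShear {X G : Type*} [TopologicalSpace X] [TopologicalSpace G] [AddGroup G]
    [IsTopologicalAddGroup G] {φ : X → G} (hφ : Continuous φ) : X × G ≃ₜ X × G where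
  toFun p := (p.1, p.2 + φ p.1)
  invFun p := (p.1, p.2 - φ p.1)
  left_inv p := by simp
  right_inv p := by simp
  continuous_toFun := by fun_prop
  continuous_invFun := by fun_prop

/-- Klee's trick. -/
theorem exists_homeomorph_prod_apply_mk_zero {G : Type*} [TopologicalSpace G] [AddGroup G]
    [IsTopologicalAddGroup G] {φ θ : G → G} (hφ : Continuous φ) (hθ : Continuous θ) :
    ∃ H : G × G ≃ₜ G × G, ∀ a, θ (φ a) = a → H (a, 0) = (φ a, 0) := by
  refine ⟨(Homeomorph.addShear hφ).trans ((Homeomorph.prodComm G G).trans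
    (Homeomorph.addShear hθ.neg)), fun a ha => ?_⟩
  simp [Homeomorph.addShear, ha]

theorem exists_equiv_prod_self_apply_of_finite {α : Type*} [Infinite α] {F : Set α}
    (hF : F.Finite) (b : α) : ∃ σ : α ≃ α × α, ∀ x ∈ F, σ x = (x, b) := by
  have hlt : Cardinal.mk F < Cardinal.mk α :=
    (Cardinal.lt_aleph0_iff_set_finite.2 hF).trans_le (Cardinal.aleph0_le_mk α)
  have hequiv : Nonempty (α ≃ α × α) := Cardinal.eq.1 <| by
    rw [Cardinal.mk_prod, Cardinal.lift_id, Cardinal.mul_eq_self (Cardinal.aleph0_le_mk α)]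
  obtain ⟨σ, hσ⟩ := Cardinal.extend_function_of_lt
    ⟨fun x : F => ((x : α), b), fun x y h => Subtype.ext (congrArg Prod.fst h)⟩ hlt hequiv
  exact ⟨σ, fun x hx => hσ ⟨x, hx⟩⟩

def Homeomorph.arrowProdEquivProdArrow (ι : Type*) (β γ : ι → Type*) [∀ i, TopologicalSpace (β i)]
    [∀ i, TopologicalSpace (γ i)] : (∀ i, β i × γ i) ≃ₜ (∀ i, β i) × (∀ i, γ i) where
  toEquiv := Equiv.arrowProdEquivProdArrow ι β γ
  continuous_toFun := by dsimp [Equiv.arrowProdEquivProdArrow]; fun_prop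
  continuous_invFun := by dsimp [Equiv.arrowProdEquivProdArrow]; fun_prop

theorem IsCompact.exists_homeomorph_prod_apply_eq_mk_zero {α : Type*} [TopologicalSpace α]
    [DiscreteTopology α] [Infinite α] [Zero α] {K : Set (ℕ → α)} (hK : IsCompact K) :
    ∃ τ : (ℕ → α) ≃ₜ (ℕ → α) × (ℕ → α), ∀ k ∈ K, τ k = (k, 0) := by
  have hfin n : (eval n '' K).Finite := (hK.image (continuous_apply n)).finite_of_discrete
  choose σ hσ using fun n => exists_equiv_prod_self_apply_of_finite (hfin n) (0 : α)
  refine ⟨(Homeomorph.piCongrRight fun n => (σ n).toHomeomorphOfDiscrete).trans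
    (Homeomorph.arrowProdEquivProdArrow _ _ _), fun k hk => ?_⟩
  have hk' n : σ n (k n) = (k n, 0) := hσ n (k n) (mem_image_of_mem _ hk)
  ext n
  exacts [congrArg Prod.fst (hk' n), congrArg Prod.snd (hk' n)]

theorem hasHomeomorphExtension_pi_nat {α : Type*} [TopologicalSpace α] [DiscreteTopology α]
    [AddGroup α] [Infinite α] : HasHomeomorphExtension (ℕ → α) := by
  intro A hA ψ hψ hinj
  have := isCompact_iff_compactSpace.1 hA
  have hemb := hψ.isClosedEmbedding hinj
  obtain ⟨φ, hφ, hφψ⟩ := exists_continuous_extension_of_isClosed hA.isClosed hψ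
  obtain ⟨θ, hθ, hθψ⟩ := exists_continuous_extension_of_isClosed hemb.isClosed_range
    (continuous_subtype_val.comp hemb.isEmbedding.toHomeomorph.symm.continuous)
  obtain ⟨H, hH⟩ := exists_homeomorph_prod_apply_mk_zero hφ hθ
  obtain ⟨τA, hτA⟩ := hA.exists_homeomorph_prod_apply_eq_mk_zero
  obtain ⟨τB, hτB⟩ := (isCompact_range hψ).exists_homeomorph_prod_apply_eq_mk_zero
  refine ⟨τA.trans (H.trans τB.symm), fun a => ?_⟩
  have hθφ : θ (φ a) = a := by
    rw [hφψ, hθψ ⟨ψ a, mem_range_self a⟩]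
    exact congrArg Subtype.val (hemb.isEmbedding.toHomeomorph_symm_apply a)
  rw [Homeomorph.trans_apply, Homeomorph.trans_apply, hτA a a.2, hH a hθφ, hφψ,
    ← hτB (ψ a) (mem_range_self a), Homeomorph.symm_apply_apply]

theorem hasHomeomorphExtension_baire : HasHomeomorphExtension (ℕ → ℕ) :=
  (hasHomeomorphExtension_pi_nat (α := ℤ)).of_homeomorph
    (Homeomorph.piCongrRight fun _ => Equiv.intEquivNat.symm.toHomeomorphOfDiscrete)

end Extension

section Cylinders

theorem IsCompact.exists_forall_cylinder_subset {E : ℕ → Type*} [∀ n, TopologicalSpace (E n)]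
    [∀ n, DiscreteTopology (E n)] {Q : Set (∀ n, E n)} (hQ : IsCompact Q) {ι : Type*}
    {U : ι → Set (∀ n, E n)} (hU : ∀ i, IsOpen (U i)) (hQU : Q ⊆ ⋃ i, U i) :
    ∃ K, ∀ q ∈ Q, ∃ i, cylinder q K ⊆ U i := by
  let O (K : ℕ) : Set (∀ n, E n) := {q | ∃ i, cylinder q K ⊆ U i}
  have hO K : IsOpen (O K) := isOpen_iff_forall_mem_open.2 fun q hq =>
    ⟨cylinder q K, fun w hw => hq.imp fun _ => (mem_cylinder_iff_eq.1 hw).subset.trans,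
      isOpen_cylinder _ q K, self_mem_cylinder q K⟩
  have hmono : Monotone O := fun K L hKL q ⟨i, hi⟩ => ⟨i, (cylinder_anti q hKL).trans hi⟩
  have hcover : Q ⊆ ⋃ K, O K := fun q hq => by
    obtain ⟨i, hqi⟩ := mem_iUnion.1 (hQU hq)
    obtain ⟨_, ⟨y, K, rfl⟩, hq, hsub⟩ :=
      (isTopologicalBasis_cylinders E).exists_subset_of_mem_open hqi (hU i)
    exact mem_iUnion.2 ⟨K, i, (mem_cylinder_iff_eq.1 hq).symm ▸ hsub⟩
  exact hQ.elim_directed_cover O hO hcover hmono.directed_le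

def Homeomorph.prodShearOfDiscrete {B Y : Type*} [TopologicalSpace B] [DiscreteTopology B]
    [TopologicalSpace Y] (Φ : B → Y ≃ₜ Y) : B × Y ≃ₜ B × Y where
  toEquiv := (Equiv.refl B).prodShear fun b => (Φ b).toEquiv
  continuous_toFun := continuous_prod_of_discrete_left.2 fun b =>
    continuous_const.prodMk (Φ b).continuous
  continuous_invFun := continuous_prod_of_discrete_left.2 fun b =>
    continuous_const.prodMk (Φ b).symm.continuous

@[simp]
theorem Homeomorph.prodShearOfDiscrete_apply {B Y : Type*} [TopologicalSpace B]
    [DiscreteTopology B] [TopologicalSpace Y] (Φ : B → Y ≃ₜ Y) (z : B × Y) :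
    Homeomorph.prodShearOfDiscrete Φ z = (z.1, Φ z.1 z.2) :=
  rfl

theorem HasHomeomorphExtension.exists_prod_of_discrete {B Y : Type*} [TopologicalSpace B]
    [DiscreteTopology B] [TopologicalSpace Y] (hY : HasHomeomorphExtension Y)
    {A : Set (B × Y)} (hA : IsCompact A) (ψ : A → B × Y) (hψ : Continuous ψ)
    (hinj : Injective ψ) (hfst : ∀ a : A, (ψ a).1 = (a : B × Y).1) :
    ∃ Ψ : B × Y ≃ₜ B × Y, (∀ a : A, Ψ a = ψ a) ∧
      ∀ z, (Ψ z).1 = z.1 ∧ (Ψ z = z ∨ ∃ a ∈ A, a.1 = z.1) := by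
  let slice (b : B) : Set Y := Prod.mk b ⁻¹' A
  have hΦ (b : B) : ∃ Φ : Y ≃ₜ Y,
      (∀ y : slice b, Φ y = (ψ ⟨(b, y), y.2⟩).2) ∧ (slice b = ∅ → ∀ y, Φ y = y) := by
    rcases (slice b).eq_empty_or_nonempty with h | h
    · exact ⟨Homeomorph.refl _, fun y => (h.subset y.2).elim, fun _ _ => rfl⟩
    have hcompact : IsCompact (slice b) := IsClosedEmbedding.isCompact_preimage
      ⟨isEmbedding_prodMkRight b, (isClosedMap_prodMk_left b).isClosed_range⟩ hA
    refine (hY hcompact _ (by fun_prop) fun y₁ y₂ hy => ?_).imp fun Φ hΦ =>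
      ⟨hΦ, fun h' => (h.ne_empty h').elim⟩
    have := hinj (Prod.ext ((hfst ⟨(b, y₁), y₁.2⟩).trans (hfst ⟨(b, y₂), y₂.2⟩).symm) hy)
    simpa [Subtype.ext_iff] using this
  choose Φ hΦψ hΦid using hΦ
  refine ⟨Homeomorph.prodShearOfDiscrete Φ, fun a => ?_, fun z => ⟨rfl, ?_⟩⟩
  · refine Prod.ext (hfst a).symm ?_
    simpa using hΦψ (a : B × Y).1 ⟨(a : B × Y).2, a.2⟩
  · rcases (slice z.1).eq_empty_or_nonempty with h | ⟨y, hy⟩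
    · exact Or.inl (by simp [hΦid _ h])
    · exact Or.inr ⟨(z.1, y), hy, rfl⟩

variable {α : Type*} [TopologicalSpace α]

variable (α) in
def piNatSplitAt (K : ℕ) : (ℕ → α) ≃ₜ (Fin K → α) × (ℕ → α) :=
  (Homeomorph.piCongrLeft (finSumNatEquiv K)).symm.trans (Homeomorph.sumPiEquivProdPi _ _ _)

theorem piNatSplitAt_fst (K : ℕ) (z : ℕ → α) (i : Fin K) : (piNatSplitAt α K z).1 i = z i :=
  rfl

theorem mem_cylinder_iff_piNatSplitAt_fst {K : ℕ} {z w : ℕ → α} :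
    z ∈ cylinder w K ↔ (piNatSplitAt α K z).1 = (piNatSplitAt α K w).1 := by
  simp [mem_cylinder_iff, funext_iff, piNatSplitAt_fst, Fin.forall_iff]

theorem isOpen_setOf_mem_cylinder [DiscreteTopology α] (K : ℕ) :
    IsOpen {p : (ℕ → α) × (ℕ → α) | p.1 ∈ cylinder p.2 K} := by
  simp_rw [mem_cylinder_iff_piNatSplitAt_fst]
  exact (isOpen_discrete {q : (Fin K → α) × (Fin K → α) | q.1 = q.2}).preimage
    (f := fun p : (ℕ → α) × (ℕ → α) => ((piNatSplitAt α K p.1).1, (piNatSplitAt α K p.2).1))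
    (by fun_prop)

theorem HasHomeomorphExtension.exists_mem_cylinder [DiscreteTopology α]
    (hY : HasHomeomorphExtension (ℕ → α)) (K : ℕ) {A : Set (ℕ → α)} (hA : IsCompact A)
    (ψ : A → ℕ → α) (hψ : Continuous ψ) (hinj : Injective ψ)
    (hcyl : ∀ a : A, ψ a ∈ cylinder (a : ℕ → α) K) :
    ∃ Ψ : (ℕ → α) ≃ₜ (ℕ → α), (∀ a : A, Ψ a = ψ a) ∧
      ∀ z, Ψ z = z ∨ ∃ a ∈ A, z ∈ cylinder a K ∧ Ψ z ∈ cylinder a K := by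
  let S := piNatSplitAt α K
  obtain ⟨Ψ, hΨψ, hΨ⟩ := hY.exists_prod_of_discrete (S.symm.isCompact_preimage.2 hA)
    (fun a' => S (ψ ⟨S.symm a', a'.2⟩)) (by fun_prop)
    (fun a' b' hab => by simpa [Subtype.ext_iff] using hinj (S.injective hab))
    fun a' => by simpa [S] using mem_cylinder_iff_piNatSplitAt_fst.1 (hcyl ⟨S.symm a', a'.2⟩)
  refine ⟨S.trans (Ψ.trans S.symm), fun a => ?_, fun z => ?_⟩
  · simpa using congrArg S.symm (hΨψ ⟨S a, by simp⟩)
  · obtain ⟨hfst, hz | ⟨a', ha', hfst'⟩⟩ := hΨ (S z)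
    · exact Or.inl (by simp [hz])
    · refine Or.inr ⟨S.symm a', ha', ?_, ?_⟩ <;>
        rw [mem_cylinder_iff_piNatSplitAt_fst] <;> simp [S, hfst, hfst']

end Cylinders

theorem isOpen_setOf_lt_of_isOpen_iff {Y : Type*} [TopologicalSpace Y] {d : Y → Y → ℝ}
    (hd_tri : ∀ x y z, d x z ≤ d x y + d y z)
    (hd_top : ∀ s : Set Y, IsOpen s ↔ ∀ x ∈ s, ∃ ε > 0, {y | d x y < ε} ⊆ s) (z : Y) (r : ℝ) :
    IsOpen {v | d z v < r} :=
  (hd_top _).2 fun v hv => ⟨r - d z v, sub_pos.2 hv, fun y (hy : d v y < r - d z v) =>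
    (hd_tri z v y).trans_lt (by linarith)⟩

theorem IsCompact.exists_forall_mem_cylinder_lt {E : ℕ → Type*} [∀ n, TopologicalSpace (E n)]
    [∀ n, DiscreteTopology (E n)] {d : (∀ n, E n) → (∀ n, E n) → ℝ}
    (hd_self : ∀ x, d x x = 0) (hd_symm : ∀ x y, d x y = d y x)
    (hd_tri : ∀ x y z, d x z ≤ d x y + d y z)
    (hd_top : ∀ s : Set (∀ n, E n), IsOpen s ↔ ∀ x ∈ s, ∃ ε > 0, {y | d x y < ε} ⊆ s)
    {Q : Set (∀ n, E n)} (hQ : IsCompact Q) {h : (∀ n, E n) → (∀ n, E n)} (hh : Continuous h)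
    {ε : ℝ} (hε : 0 < ε) :
    ∃ K, ∀ q ∈ Q, ∀ u ∈ cylinder q K, ∀ v ∈ cylinder q K, d u v < ε ∧ d (h u) (h v) < ε := by
  let U (z : ∀ n, E n) := {v | d z v < ε / 2} ∩ h ⁻¹' {v | d (h z) v < ε / 2}
  have hU z : IsOpen (U z) := (isOpen_setOf_lt_of_isOpen_iff hd_tri hd_top z _).inter
    ((isOpen_setOf_lt_of_isOpen_iff hd_tri hd_top (h z) _).preimage hh)
  have hQU : Q ⊆ ⋃ z, U z := fun q _ => mem_iUnion.2 ⟨q, by simp [U, hd_self, hε]⟩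
  obtain ⟨K, hK⟩ := hQ.exists_forall_cylinder_subset hU hQU
  refine ⟨K, fun q hq u hu v hv => ?_⟩
  obtain ⟨z, hz⟩ := hK q hq
  obtain ⟨⟨hu₁ : d z u < ε / 2, hu₂ : d (h z) (h u) < ε / 2⟩,
    ⟨hv₁ : d z v < ε / 2, hv₂ : d (h z) (h v) < ε / 2⟩⟩ := And.intro (hz hu) (hz hv)
  constructor
  · linarith [hd_tri u z v, hd_symm u z]
  · linarith [hd_tri (h u) (h z) (h v), hd_symm (h u) (h z)]

theorem dTilde_trans_le {d : (ℕ → ℕ) → (ℕ → ℕ) → ℝ} (hd_self : ∀ x, d x x = 0)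
    {A : Set (ℕ → ℕ)} {K : ℕ} {r : ℝ} (hr : 0 ≤ r) {h₀ Ψ : (ℕ → ℕ) ≃ₜ (ℕ → ℕ)}
    (hsmall : ∀ a ∈ A, ∀ u ∈ cylinder a K, ∀ v ∈ cylinder a K, d u v < r ∧ d (h₀ u) (h₀ v) < r)
    (hΨ : ∀ z, Ψ z = z ∨ ∃ a ∈ A, z ∈ cylinder a K ∧ Ψ z ∈ cylinder a K) :
    dTilde d h₀ (Ψ.trans h₀) ≤ r + r := by
  have hclose z : d (h₀ z) (h₀ (Ψ z)) ≤ r ∧ d (Ψ z) z ≤ r := by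
    rcases hΨ z with hz | ⟨a, ha, hza, hΨza⟩
    · simp [hz, hd_self, hr]
    · exact ⟨(hsmall a ha z hza _ hΨza).2.le, (hsmall a ha _ hΨza z hza).1.le⟩
  refine add_le_add (ciSup_le fun z => (hclose z).1) (ciSup_le fun c => ?_)
  simpa using (hclose (Ψ.symm (h₀.symm c))).2

theorem isOpen_setOf_forall_fiber_mem {P X : Type*} [TopologicalSpace P] [CompactSpace P]
    [TopologicalSpace X] [T2Space X] {π : P → X} (hπ : Continuous π) {O : Set P}
    (hO : IsOpen O) : IsOpen {x | ∀ p, π p = x → p ∈ O} := by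
  have : {x | ∀ p, π p = x → p ∈ O} = (π '' Oᶜ)ᶜ := by
    ext x
    simp only [mem_compl_iff, mem_image, not_exists, not_and]
    exact forall_congr' fun p => not_imp_not.symm
  rw [this]
  exact (hO.isClosed_compl.isCompact.image hπ).isClosed.isOpen_compl

theorem exists_isOpen_inter_eq_of_forall {X : Type*} [TopologicalSpace X] {S T : Set X}
    (hST : S ⊆ T) (h : ∀ x ∈ S, ∃ V, IsOpen V ∧ x ∈ V ∧ V ∩ T ⊆ S) :
    ∃ U, IsOpen U ∧ S = U ∩ T := by
  refine ⟨⋃₀ {V | IsOpen V ∧ V ∩ T ⊆ S}, isOpen_sUnion fun V hV => hV.1,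
    Subset.antisymm (fun x hx => ?_) ?_⟩
  · obtain ⟨V, hVo, hxV, hVS⟩ := h x hx
    exact ⟨⟨V, ⟨hVo, hVS⟩, hxV⟩, hST hx⟩
  · rintro x ⟨⟨V, hV, hxV⟩, hxT⟩
    exact hV.2 ⟨hxV, hxT⟩

theorem ZeroDimensional.t2Space {X : Type u} [TopologicalSpace X] (hX : ZeroDimensional X) :
    T2Space X := by
  obtain ⟨Z, _, -, hZ, -, e, he, -⟩ := hX
  exact he.t2Space

section Fibres

variable {X : Type*} [TopologicalSpace X] {P : Set (X × (ℕ → ℕ))} {F : P → X × (ℕ → ℕ)}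
  {g : X → X} {h₀ : (ℕ → ℕ) ≃ₜ (ℕ → ℕ)} {K : ℕ}

theorem exists_homeomorph_fiber_eq_of_forall_mem_cylinder [T2Space X] (hP : IsCompact P)
    (hF : Continuous F) (hFinj : Injective F) (hFg : ∀ p : P, g (p : X × (ℕ → ℕ)).1 = (F p).1)
    {x : X} (hx : ∀ c (hc : (x, c) ∈ P), h₀.symm (F ⟨(x, c), hc⟩).2 ∈ cylinder c K) :
    ∃ Ψ : (ℕ → ℕ) ≃ₜ (ℕ → ℕ),
      (∀ z, Ψ z = z ∨ ∃ a ∈ Prod.mk x ⁻¹' P, z ∈ cylinder a K ∧ Ψ z ∈ cylinder a K) ∧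
      ∀ c (hc : (x, c) ∈ P), F ⟨(x, c), hc⟩ = (g x, h₀ (Ψ c)) := by
  let A : Set (ℕ → ℕ) := Prod.mk x ⁻¹' P
  have hA : IsCompact A := (hP.image continuous_snd).of_isClosed_subset
    (hP.isClosed.preimage (by fun_prop)) fun c hc => ⟨_, hc, rfl⟩
  let ψ (c : A) : ℕ → ℕ := h₀.symm (F ⟨(x, c), c.2⟩).2
  have hψinj : Injective ψ := fun c₁ c₂ hc => by
    have := hFinj (Prod.ext ((hFg ⟨(x, c₁), c₁.2⟩).symm.trans (hFg ⟨(x, c₂), c₂.2⟩))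
      (h₀.symm.injective hc))
    simpa [Subtype.ext_iff] using this
  obtain ⟨Ψ, hΨψ, hΨ⟩ := hasHomeomorphExtension_baire.exists_mem_cylinder K hA ψ (by fun_prop)
    hψinj fun c => hx c c.2
  refine ⟨Ψ, hΨ, fun c hc => Prod.ext (hFg _).symm ?_⟩
  simp [hΨψ ⟨c, hc⟩, ψ]

theorem exists_isOpen_forall_exists_dTilde_lt [T2Space X] (hP : IsCompact P)
    (hF : Continuous F) (hFinj : Injective F) (hFg : ∀ p : P, g (p : X × (ℕ → ℕ)).1 = (F p).1)
    {d : (ℕ → ℕ) → (ℕ → ℕ) → ℝ} (hd_self : ∀ x, d x x = 0) (hd_symm : ∀ x y, d x y = d y x)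
    (hd_tri : ∀ x y z, d x z ≤ d x y + d y z)
    (hd_top : ∀ s : Set (ℕ → ℕ), IsOpen s ↔ ∀ x ∈ s, ∃ ε > 0, {y | d x y < ε} ⊆ s)
    {x₀ : X} (hh₀ : ∀ c (hc : (x₀, c) ∈ P), F ⟨(x₀, c), hc⟩ = (g x₀, h₀ c)) {ε : ℝ}
    (hε : 0 < ε) :
    ∃ V : Set X, IsOpen V ∧ x₀ ∈ V ∧ ∀ x ∈ V, ∃ h : (ℕ → ℕ) ≃ₜ (ℕ → ℕ),
      dTilde d h₀ h < ε ∧ ∀ c (hc : (x, c) ∈ P), F ⟨(x, c), hc⟩ = (g x, h c) := by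
  obtain ⟨K, hK⟩ := (hP.image continuous_snd).exists_forall_mem_cylinder_lt hd_self hd_symm
    hd_tri hd_top h₀.continuous (div_pos hε three_pos)
  let O : Set P := {p | h₀.symm (F p).2 ∈ cylinder (p : X × (ℕ → ℕ)).2 K}
  have hO : IsOpen O := (isOpen_setOf_mem_cylinder K).preimage
    (f := fun p : P => (h₀.symm (F p).2, (p : X × (ℕ → ℕ)).2)) (by fun_prop)
  have := isCompact_iff_compactSpace.1 hP
  refine ⟨_, isOpen_setOf_forall_fiber_mem (π := fun p : P => (p : X × (ℕ → ℕ)).1)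
    (by fun_prop) hO, ?_, fun x hx => ?_⟩
  · rintro ⟨⟨x, c⟩, hc⟩ rfl
    simp [O, hh₀ c hc]
  obtain ⟨Ψ, hΨ, hΨF⟩ := exists_homeomorph_fiber_eq_of_forall_mem_cylinder hP hF hFinj hFg
    fun c hc => hx ⟨(x, c), hc⟩ rfl
  refine ⟨Ψ.trans h₀, ?_, hΨF⟩
  calc dTilde d h₀ (Ψ.trans h₀) ≤ ε / 3 + ε / 3 :=
        dTilde_trans_le hd_self (by positivity) (fun a ha => hK a ⟨_, ha, rfl⟩) hΨ
    _ < ε := by linarith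

end Fibres

theorem stmt8_general {X : Type u} [TopologicalSpace X] (hX : ZeroDimensional X)
    (P K : Set (X × (ℕ → ℕ))) (hP : IsCompact P)
    (f : ↥P ≃ₜ ↥K) (g : X ≃ₜ X)
    (hfg : ∀ p : P, g ((p : X × (ℕ → ℕ)).1) = (f p : X × (ℕ → ℕ)).1)
    -- `d` is a bounded complete metric on `ℕ^ℕ` inducing the product topology:
    (d : (ℕ → ℕ) → (ℕ → ℕ) → ℝ)
    (hd_eq : ∀ x y, d x y = 0 ↔ x = y)
    (hd_symm : ∀ x y, d x y = d y x)
    (hd_tri : ∀ x y z, d x z ≤ d x y + d y z)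
    (hd_top : ∀ s : Set (ℕ → ℕ), IsOpen s ↔ ∀ x ∈ s, ∃ ε > 0, {y | d x y < ε} ⊆ s)
    -- `W` is a `d̃`-open set of autohomeomorphisms of `ℕ^ℕ`:
    (W : Set ((ℕ → ℕ) ≃ₜ (ℕ → ℕ)))
    (hW : ∀ h ∈ W, ∃ ε > 0, ∀ h', dTilde d h h' < ε → h' ∈ W) :
    -- `{x ∈ P_X : Φ(x) ∩ W ≠ ∅}` is open in `P_X`:
    ∃ U : Set X, IsOpen U ∧
      {x ∈ Prod.fst '' P | ∃ h ∈ W, ∀ (c : ℕ → ℕ) (hc : (x, c) ∈ P),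
          (f ⟨(x, c), hc⟩ : X × (ℕ → ℕ)) = (g x, h c)}
        = U ∩ (Prod.fst '' P) := by
  have := hX.t2Space
  refine exists_isOpen_inter_eq_of_forall (sep_subset _ _) ?_
  rintro x₀ ⟨-, h₀, hh₀W, hh₀⟩
  obtain ⟨ε, hε, hεW⟩ := hW h₀ hh₀W
  obtain ⟨V, hVo, hx₀V, hV⟩ := exists_isOpen_forall_exists_dTilde_lt hP (F := fun p => f p)
    (by fun_prop) (Subtype.val_injective.comp f.injective) hfg (fun x => (hd_eq x x).2 rfl)
    hd_symm hd_tri hd_top hh₀ hε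
  refine ⟨V, hVo, hx₀V, fun x ⟨hxV, hxP⟩ => ⟨hxP, ?_⟩⟩
  obtain ⟨h, hh, hhx⟩ := hV x hxV
  exact ⟨h, hεW h hh, hhx⟩

/-- In the setting of Lemma 2.1, with `H(ℕ^ℕ)` equipped with the metric `d̃` coming from
a bounded complete metric `d` compatible with the topology of `ℕ^ℕ`: the set-valued map
`Φ : P_X ⇒ H(ℕ^ℕ)`, `Φ(x) = {h : f(x,c) = (g(x), h(c)) whenever (x,c) ∈ P}`, is lower
semi-continuous, i.e. for every `d̃`-open `W ⊆ H(ℕ^ℕ)` the set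
`{x ∈ P_X : Φ(x) ∩ W ≠ ∅}` is open in `P_X`. -/
theorem stmt8 {X : Type u} [TopologicalSpace X] (hX : ZeroDimensional X)
    (P K : Set (X × (ℕ → ℕ))) (hP : IsCompact P) (hK : IsCompact K)
    (f : ↥P ≃ₜ ↥K) (g : X ≃ₜ X)
    (hfg : ∀ p : P, g ((p : X × (ℕ → ℕ)).1) = (f p : X × (ℕ → ℕ)).1)
    -- `d` is a bounded complete metric on `ℕ^ℕ` inducing the product topology:
    (d : (ℕ → ℕ) → (ℕ → ℕ) → ℝ)
    (hd_eq : ∀ x y, d x y = 0 ↔ x = y)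
    (hd_symm : ∀ x y, d x y = d y x)
    (hd_tri : ∀ x y z, d x z ≤ d x y + d y z)
    (hd_bdd : ∃ M, ∀ x y, d x y ≤ M)
    (hd_top : ∀ s : Set (ℕ → ℕ), IsOpen s ↔ ∀ x ∈ s, ∃ ε > 0, {y | d x y < ε} ⊆ s)
    (hd_complete : ∀ u : ℕ → ℕ → ℕ,
      (∀ ε > 0, ∃ N, ∀ m ≥ N, ∀ n ≥ N, d (u m) (u n) < ε) →
      ∃ x, ∀ ε > 0, ∃ N, ∀ n ≥ N, d (u n) x < ε)
    -- `W` is a `d̃`-open set of autohomeomorphisms of `ℕ^ℕ`: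
    (W : Set ((ℕ → ℕ) ≃ₜ (ℕ → ℕ)))
    (hW : ∀ h ∈ W, ∃ ε > 0, ∀ h', dTilde d h h' < ε → h' ∈ W) :
    -- `{x ∈ P_X : Φ(x) ∩ W ≠ ∅}` is open in `P_X`:
    ∃ U : Set X, IsOpen U ∧
      {x ∈ Prod.fst '' P | ∃ h ∈ W, ∀ (c : ℕ → ℕ) (hc : (x, c) ∈ P),
          (f ⟨(x, c), hc⟩ : X × (ℕ → ℕ)) = (g x, h c)}
        = U ∩ (Prod.fst '' P) :=
  stmt8_general hX P K hP f g hfg d hd_eq hd_symm hd_tri hd_top W hW
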